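/- Let q and n be integers with 3 ≤ q ≤ n + 1. Then the subset Φ = F_q \ { x ↦ [x ≤ q−2] } (the set of all functions from {0,…,q−1} to 𝔹 except the one whose truth table is 1 1 … 1 0) is n-cell implementable under scenario (∗∗). -/

import Mathlib

/-- The alphabet 𝔹• = {0, 1, ∗, •}. -/
inductive BB : Type
  | zero
  | one
  | star
  | reject
deriving DecidableEq

instance : Fintype BB where
  elems := {BB.zero, BB.one, BB.star, BB.reject}
  complete := by intro x; cases x <;> first | decide | simp

/-- The cell function T : 𝔹• × 𝔹• → 𝔹: T(u,ϑ) = 1 iff u = ∗, or ϑ = ∗,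
or u,ϑ ∈ 𝔹 with u = ϑ. -/
def Tcell : BB → BB → Bool
  | BB.star, _ => true
  | _, BB.star => true
  | BB.zero, BB.zero => true
  | BB.one, BB.one => true
  | _, _ => false

/-- The word-level function T(u,ϑ) = ⋀_{j<n} T(u_j, ϑ_j). -/
def Tword {n : ℕ} (u θ : Fin n → BB) : Bool :=
  decide (∀ j, Tcell (u j) (θ j) = true)

/-- The alphabet 𝔹 = {0,1} ⊆ 𝔹•. -/
def Bcirc : Set BB := {BB.zero, BB.one}

/-- The alphabet 𝔹∗ = {0,1,∗} ⊆ 𝔹•. -/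
def Bstar : Set BB := {BB.zero, BB.one, BB.star}

/-- The full alphabet 𝔹•. -/
def Bdot : Set BB := Set.univ

/-- A family Φ of functions {0,…,q−1} → 𝔹 is n-cell implementable under
scenario (A,B) if there are mappings u : {0,…,q−1} → A^n and ϑ : Φ → B^n
with f(x) = T(u(x), ϑ(f)) for all f ∈ Φ and x. -/
def Implementable (A B : Set BB) (n q : ℕ) (Φ : Set (Fin q → Bool)) : Prop :=
  ∃ u : Fin q → Fin n → BB, ∃ θ : (Fin q → Bool) → Fin n → BB,
    (∀ x j, u x j ∈ A) ∧ (∀ f ∈ Φ, ∀ j, θ f j ∈ B) ∧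
    (∀ f ∈ Φ, ∀ x, f x = Tword (u x) (θ f))

/-- The family 𝓔_q = { x ↦ [x = t] : t ∈ [q⟩ }. -/
def Eset (q : ℕ) : Set (Fin q → Bool) :=
  { f | ∃ t : Fin q, f = fun x => decide (x = t) }

/-- The family 𝓝_q = { x ↦ [x ≠ t] : t ∈ [q⟩ }. -/
def Nset (q : ℕ) : Set (Fin q → Bool) :=
  { f | ∃ t : Fin q, f = fun x => decide (x ≠ t) }

/-- The family 𝓖_q = { x ↦ [x ≥ t] : t ∈ [q⟩ }. -/
def Gset (q : ℕ) : Set (Fin q → Bool) :=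
  { f | ∃ t : Fin q, f = fun x => decide (t ≤ x) }

/-- The family 𝓛_q = { x ↦ [x ≤ t] : t ∈ [q⟩ }. -/
def Lset (q : ℕ) : Set (Fin q → Bool) :=
  { f | ∃ t : Fin q, f = fun x => decide (x ≤ t) }

/-! Write q = p + 1 and fix a derangement σ of the first p ≥ 2 points (this is where q ≥ 3 is
needed). Row x < p is coded by 0 in column x, 1 in column σ⁻¹ x and ∗ elsewhere; the last row is
all 0. If f(p) = 1, column j of f is 0 when f(σ j) = 0 and ∗ otherwise: row x < p then fails
exactly in column σ⁻¹ x when f(x) = 0, and the last row never fails. If f(p) = 0, column j of f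
is 1 when f(j) = 0 and ∗ otherwise: row x < p fails only in column x, when f(x) = 0, and the last
row fails iff f vanishes somewhere below p, i.e. iff f is not x ↦ [x ≠ p]. Surplus columns are
padded with ∗. -/

theorem Tword_eq_true_iff {n : ℕ} (u θ : Fin n → BB) :
    Tword u θ = true ↔ ∀ j, Tcell (u j) (θ j) = true := by
  simp [Tword]

theorem Implementable.mono_length {A B : Set BB} {n n' q : ℕ} {Φ : Set (Fin q → Bool)}
    (hA : BB.star ∈ A) (hB : B.Nonempty) (hn : n ≤ n') (h : Implementable A B n q Φ) :
    Implementable A B n' q Φ := by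
  obtain ⟨u, θ, hu, hθ, hΦ⟩ := h
  obtain ⟨b, hb⟩ := hB
  refine ⟨fun x j => if hj : (j : ℕ) < n then u x ⟨j, hj⟩ else BB.star,
    fun f j => if hj : (j : ℕ) < n then θ f ⟨j, hj⟩ else b, ?_, ?_, ?_⟩
  · intro x j
    dsimp only
    split_ifs <;> simp [hu, hA]
  · intro f hf j
    dsimp only
    split_ifs <;> simp [hθ f hf, hb]
  · intro f hf x
    rw [hΦ f hf x, Bool.eq_iff_iff, Tword_eq_true_iff, Tword_eq_true_iff]
    constructor
    · intro h j
      dsimp only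
      split_ifs with hj
      · exact h _
      · cases b <;> rfl
    · intro h j
      simpa using h (Fin.castLE hn j)

section CyclicCode

variable {p : ℕ} (σ : Equiv.Perm (Fin p))

def cyclicRowCode : Fin (p + 1) → Fin p → BB :=
  Fin.lastCases (fun _ => BB.zero)
    (fun i j => if i = j then BB.zero else if i = σ j then BB.one else BB.star)

def cyclicFunCode (f : Fin (p + 1) → Bool) (j : Fin p) : BB :=
  if f (Fin.last p) then (if f (σ j).castSucc then BB.star else BB.zero)
  else (if f j.castSucc then BB.star else BB.one)

theorem cyclicRowCode_mem_Bstar (x : Fin (p + 1)) (j : Fin p) :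
    cyclicRowCode σ x j ∈ Bstar := by
  induction x using Fin.lastCases with
  | last => simp [cyclicRowCode, Bstar]
  | cast i =>
    simp only [cyclicRowCode, Fin.lastCases_castSucc]
    split_ifs <;> simp [Bstar]

theorem cyclicFunCode_mem_Bstar (f : Fin (p + 1) → Bool) (j : Fin p) :
    cyclicFunCode σ f j ∈ Bstar := by
  unfold cyclicFunCode; split_ifs <;> simp [Bstar]

theorem Tcell_cyclicCode_last (f : Fin (p + 1) → Bool) (j : Fin p) :
    Tcell (cyclicRowCode σ (Fin.last p) j) (cyclicFunCode σ f j) =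
      (f (Fin.last p) || f j.castSucc) := by
  simp only [cyclicRowCode, Fin.lastCases_last, cyclicFunCode]
  split_ifs <;> simp_all [Tcell]

theorem Tcell_cyclicCode_castSucc {j : Fin p} (hj : σ j ≠ j) (f : Fin (p + 1) → Bool)
    (i : Fin p) :
    Tcell (cyclicRowCode σ i.castSucc j) (cyclicFunCode σ f j) =
      if f (Fin.last p) then (decide (i ≠ σ j) || f i.castSucc)
      else (decide (i ≠ j) || f i.castSucc) := by
  have hj' := hj.symm
  simp only [cyclicRowCode, Fin.lastCases_castSucc, cyclicFunCode]
  split_ifs <;> simp_all [Tcell]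

theorem Tword_cyclicCode_last {f : Fin (p + 1) → Bool}
    (hf : f ≠ fun x => decide (x ≠ Fin.last p)) :
    Tword (cyclicRowCode σ (Fin.last p)) (cyclicFunCode σ f) = f (Fin.last p) := by
  rw [Bool.eq_iff_iff, Tword_eq_true_iff]
  simp only [Tcell_cyclicCode_last, Bool.or_eq_true]
  refine ⟨fun h => ?_, fun h _ => Or.inl h⟩
  by_contra hlast
  refine hf (funext fun x => ?_)
  induction x using Fin.lastCases with
  | last => simpa using hlast
  | cast i => simpa [Fin.castSucc_ne_last] using (h i).resolve_left hlast

theorem Tword_cyclicCode_castSucc (hσ : ∀ j, σ j ≠ j) (f : Fin (p + 1) → Bool) (i : Fin p) :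
    Tword (cyclicRowCode σ i.castSucc) (cyclicFunCode σ f) = f i.castSucc := by
  rw [Bool.eq_iff_iff, Tword_eq_true_iff]
  simp only [Tcell_cyclicCode_castSucc σ (hσ _)]
  refine ⟨fun h => ?_, fun h j => by split_ifs <;> simp [h]⟩
  cases hlast : f (Fin.last p)
  · simpa [hlast] using h i
  · simpa [hlast] using h (σ.symm i)

theorem implementable_compl_ne_last (hσ : ∀ j, σ j ≠ j) :
    Implementable Bstar Bstar p (p + 1) {fun x => decide (x ≠ Fin.last p)}ᶜ := by
  refine ⟨cyclicRowCode σ, cyclicFunCode σ, cyclicRowCode_mem_Bstar σ,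
    fun f _ => cyclicFunCode_mem_Bstar σ f, fun f hf x => ?_⟩
  induction x using Fin.lastCases with
  | last => exact (Tword_cyclicCode_last σ hf).symm
  | cast i => exact (Tword_cyclicCode_castSucc σ hσ f i).symm

end CyclicCode

theorem Fset_minus_Lq2_implementable_starStar (q n : ℕ)
    (hq : 3 ≤ q) (hqn : q ≤ n + 1) :
    Implementable Bstar Bstar n q
      ({ fun x : Fin q => decide ((x : ℕ) ≤ q - 2) }ᶜ) := by
  obtain ⟨k, rfl⟩ : ∃ k, q = k + 2 + 1 := ⟨q - 3, by omega⟩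
  have hL : (fun x : Fin (k + 2 + 1) => decide ((x : ℕ) ≤ k + 2 + 1 - 2)) =
      fun x => decide (x ≠ Fin.last (k + 2)) := by
    funext x
    rw [decide_eq_decide, ne_eq, Fin.ext_iff, Fin.val_last]
    omega
  have hderangement : ∀ j, finRotate (k + 2) j ≠ j := fun j =>
    Equiv.Perm.mem_support.mp (support_finRotate ▸ Finset.mem_univ j)
  rw [hL]
  exact (implementable_compl_ne_last _ hderangement).mono_length (by simp [Bstar])
    ⟨BB.star, by simp [Bstar]⟩ (by omega)
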